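/- Let K be an algebraically closed field of characteristic 2, k ≥ 2 a natural number, and b, c ∈ K with b^{5k−6} = c^{5k−6} and b, c nonzero. Then the K-algebras Q(2A)^k(b) and Q(2A)^k(c) are isomorphic; explicitly, choosing d ∈ K with d² = b^{−1}c, the assignment α ↦ d²α, β ↦ β, γ ↦ d³γ defines a K-algebra isomorphism Q(2A)^k(b) → Q(2A)^k(c). -/

import Mathlib

/-!
Give `α` weight 2, `γ` weight 3 and `e₁, e₂, β` weight 0, and let `rescale d` multiply each
generator of the free algebra by `d ^ weight`. The cycles `βγα`, `αβγ`, `γαβ` have weight 5, so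
when `d ^ (5k - 6) = 1` and `b d² = c` every defining relation of `Q(2A)^k(b)` is sent to a scalar
multiple of the corresponding relation of `Q(2A)^k(c)`; `rescale d⁻¹` induces the inverse map.
Finally `(d ^ (5k - 6))² = (b⁻¹c) ^ (5k - 6) = 1`, and squaring is injective in characteristic 2.
-/

/- The algebra Q(2A)^k(b): quiver with vertices 1,2, loop α at 1,
   arrows β : 1 → 2, γ : 2 → 1, with relations
   α² = (βγα)^{k−1}βγ + b(βγα)^k, βγβ = (αβγ)^{k−1}αβ,
   γβγ = (γαβ)^{k−1}γα, α²β = 0. -/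

namespace SocleWSA6

variable (K : Type) [Field K]

/-- Generators: 0 = e₁, 1 = e₂, 2 = α, 3 = β, 4 = γ. -/
noncomputable def e1 : FreeAlgebra K (Fin 5) := FreeAlgebra.ι K 0
noncomputable def e2 : FreeAlgebra K (Fin 5) := FreeAlgebra.ι K 1
noncomputable def al : FreeAlgebra K (Fin 5) := FreeAlgebra.ι K 2
noncomputable def be : FreeAlgebra K (Fin 5) := FreeAlgebra.ι K 3
noncomputable def ga : FreeAlgebra K (Fin 5) := FreeAlgebra.ι K 4

inductive QARel (k : ℕ) (b : K) : FreeAlgebra K (Fin 5) → FreeAlgebra K (Fin 5) → Prop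
  | unit : QARel k b (e1 K + e2 K) 1
  | idem1 : QARel k b (e1 K * e1 K) (e1 K)
  | idem2 : QARel k b (e2 K * e2 K) (e2 K)
  | orth12 : QARel k b (e1 K * e2 K) 0
  | orth21 : QARel k b (e2 K * e1 K) 0
  | sal : QARel k b (e1 K * al K) (al K)
  | tal : QARel k b (al K * e1 K) (al K)
  | sbe : QARel k b (e1 K * be K) (be K)
  | tbe : QARel k b (be K * e2 K) (be K)
  | sga : QARel k b (e2 K * ga K) (ga K)
  | tga : QARel k b (ga K * e1 K) (ga K)
  | r1 : QARel k b (al K * al K)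
      ((be K * ga K * al K) ^ (k - 1) * (be K * ga K) + b • (be K * ga K * al K) ^ k)
  | r2 : QARel k b (be K * ga K * be K) ((al K * be K * ga K) ^ (k - 1) * (al K * be K))
  | r3 : QARel k b (ga K * be K * ga K) ((ga K * al K * be K) ^ (k - 1) * (ga K * al K))
  | r4 : QARel k b (al K * al K * be K) 0

/-- The canonical projection onto `Q(2A)^k(b)`. -/
noncomputable def pi (k : ℕ) (b : K) :
    FreeAlgebra K (Fin 5) →ₐ[K] RingQuot (QARel K k b) :=
  RingQuot.mkAlgHom K (QARel K k b)

end SocleWSA6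

namespace SocleWSA6

variable {K : Type} [Field K]

noncomputable def rescale (d : K) : FreeAlgebra K (Fin 5) →ₐ[K] FreeAlgebra K (Fin 5) :=
  FreeAlgebra.lift K fun i => ![1, 1, d ^ 2, 1, d ^ 3] i • FreeAlgebra.ι K i

section rescale

variable (d : K)

@[simp] lemma rescale_e1 : rescale d (e1 K) = e1 K := by simp [rescale, e1]
@[simp] lemma rescale_e2 : rescale d (e2 K) = e2 K := by simp [rescale, e2]
@[simp] lemma rescale_al : rescale d (al K) = d ^ 2 • al K := by simp [rescale, al]
@[simp] lemma rescale_be : rescale d (be K) = be K := by simp [rescale, be]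
@[simp] lemma rescale_ga : rescale d (ga K) = d ^ 3 • ga K := by simp [rescale, ga]

lemma rescale_rescale (e : K) (x : FreeAlgebra K (Fin 5)) :
    rescale d (rescale e x) = rescale (d * e) x := by
  rw [← AlgHom.comp_apply]
  congr 1
  ext i
  fin_cases i <;> simp [rescale, smul_smul, mul_pow, mul_comm]

lemma rescale_one (x : FreeAlgebra K (Fin 5)) : rescale (1 : K) x = x := by
  rw [← AlgHom.id_apply (R := K) x]
  congr 1
  ext i
  fin_cases i <;> simp [rescale]

end rescale

lemma pow_five_pow_pred {k : ℕ} (hk : 2 ≤ k) {d : K} (hd : d ^ (5 * k - 6) = 1) :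
    (d ^ 5) ^ (k - 1) = d := by
  rw [← pow_mul, show 5 * (k - 1) = (5 * k - 6) + 1 by omega, pow_succ, hd, one_mul]

lemma pow_five_pow {k : ℕ} (hk : 2 ≤ k) {d : K} (hd : d ^ (5 * k - 6) = 1) :
    (d ^ 5) ^ k = d ^ 6 := by
  rw [← pow_mul, show 5 * k = (5 * k - 6) + 6 by omega, pow_add, hd, one_mul]

lemma QARel.exists_rescale_eq_smul {k : ℕ} (hk : 2 ≤ k) {b c d : K} (hd : d ^ (5 * k - 6) = 1)
    (hbd : b * d ^ 2 = c) {x y : FreeAlgebra K (Fin 5)} (h : QARel K k b x y) :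
    ∃ (μ : K) (x' y' : FreeAlgebra K (Fin 5)),
      QARel K k c x' y' ∧ rescale d x = μ • x' ∧ rescale d y = μ • y' := by
  have h1 := pow_five_pow_pred hk hd
  have h2 := pow_five_pow hk hd
  cases h with
  | unit => exact ⟨1, _, _, .unit, by simp, by simp⟩
  | idem1 => exact ⟨1, _, _, .idem1, by simp, by simp⟩
  | idem2 => exact ⟨1, _, _, .idem2, by simp, by simp⟩
  | orth12 => exact ⟨1, _, _, .orth12, by simp, by simp⟩
  | orth21 => exact ⟨1, _, _, .orth21, by simp, by simp⟩
  | sal => exact ⟨d ^ 2, _, _, .sal, by simp, rescale_al d⟩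
  | tal => exact ⟨d ^ 2, _, _, .tal, by simp, rescale_al d⟩
  | sbe => exact ⟨1, _, _, .sbe, by simp, by simp⟩
  | tbe => exact ⟨1, _, _, .tbe, by simp, by simp⟩
  | sga => exact ⟨d ^ 3, _, _, .sga, by simp, rescale_ga d⟩
  | tga => exact ⟨d ^ 3, _, _, .tga, by simp, rescale_ga d⟩
  | r1 =>
    have hX : rescale d (be K * ga K * al K) = d ^ 5 • (be K * ga K * al K) := by simp; module
    refine ⟨d ^ 4, _, _, .r1, by simp; module, ?_⟩
    rw [map_add, map_smul, map_mul, map_pow, map_pow, hX, smul_pow, smul_pow, h1, h2, ← hbd]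
    simp only [map_mul, rescale_be, rescale_ga, smul_mul_assoc, mul_smul_comm, smul_smul]
    module
  | r2 =>
    have hX : rescale d (al K * be K * ga K) = d ^ 5 • (al K * be K * ga K) := by simp; module
    refine ⟨d ^ 3, _, _, .r2, by simp, ?_⟩
    rw [map_mul, map_pow, hX, smul_pow, h1]
    simp only [map_mul, rescale_be, rescale_al, smul_mul_assoc, mul_smul_comm, smul_smul]
    module
  | r3 =>
    have hX : rescale d (ga K * al K * be K) = d ^ 5 • (ga K * al K * be K) := by simp; module
    refine ⟨d ^ 6, _, _, .r3, by simp; module, ?_⟩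
    rw [map_mul, map_pow, hX, smul_pow, h1]
    simp only [map_mul, rescale_ga, rescale_al, smul_mul_assoc, mul_smul_comm, smul_smul]
    module
  | r4 => exact ⟨d ^ 4, _, _, .r4, by simp; module, by simp⟩

section quot

variable {k : ℕ} {b c d : K}

lemma pi_rescale_eq_of_rel (hk : 2 ≤ k) (hd : d ^ (5 * k - 6) = 1) (hbd : b * d ^ 2 = c)
    {x y : FreeAlgebra K (Fin 5)} (h : QARel K k b x y) :
    pi K k c (rescale d x) = pi K k c (rescale d y) := by
  obtain ⟨μ, x', y', h', hx, hy⟩ := h.exists_rescale_eq_smul hk hd hbd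
  rw [hx, hy, map_smul, map_smul, pi, RingQuot.mkAlgHom_rel K h']

noncomputable def rescaleQuot (hk : 2 ≤ k) (hd : d ^ (5 * k - 6) = 1) (hbd : b * d ^ 2 = c) :
    RingQuot (QARel K k b) →ₐ[K] RingQuot (QARel K k c) :=
  RingQuot.liftAlgHom K ⟨(pi K k c).comp (rescale d), fun _ _ ↦ pi_rescale_eq_of_rel hk hd hbd⟩

lemma rescaleQuot_pi (hk : 2 ≤ k) (hd : d ^ (5 * k - 6) = 1) (hbd : b * d ^ 2 = c)
    (x : FreeAlgebra K (Fin 5)) :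
    rescaleQuot hk hd hbd (pi K k b x) = pi K k c (rescale d x) :=
  RingQuot.liftAlgHom_mkAlgHom_apply K _ _ x

lemma rescaleQuot_comp_rescaleQuot (hk : 2 ≤ k) {e : K} (hd : d ^ (5 * k - 6) = 1)
    (hbd : b * d ^ 2 = c) (he : e ^ (5 * k - 6) = 1) (hce : c * e ^ 2 = b) (hed : e * d = 1) :
    (rescaleQuot hk he hce).comp (rescaleQuot hk hd hbd) = AlgHom.id K _ := by
  refine RingQuot.ringQuot_ext' K _ _ (AlgHom.ext fun x ↦ ?_)
  change rescaleQuot hk he hce (rescaleQuot hk hd hbd (pi K k b x)) = pi K k b x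
  rw [rescaleQuot_pi, rescaleQuot_pi, rescale_rescale, hed, rescale_one]

noncomputable def rescaleQuotEquiv (hk : 2 ≤ k) (hd : d ^ (5 * k - 6) = 1)
    (hbd : b * d ^ 2 = c) :
    RingQuot (QARel K k b) ≃ₐ[K] RingQuot (QARel K k c) :=
  have hd0 : d ≠ 0 := by
    rintro rfl
    simp [zero_pow (show 5 * k - 6 ≠ 0 by omega)] at hd
  have hd' : d⁻¹ ^ (5 * k - 6) = 1 := by rw [inv_pow, hd, inv_one]
  have hcb : c * d⁻¹ ^ 2 = b := by rw [← hbd]; field_simp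
  AlgEquiv.ofAlgHom (rescaleQuot hk hd hbd) (rescaleQuot hk hd' hcb)
    (rescaleQuot_comp_rescaleQuot hk hd' hcb hd hbd (mul_inv_cancel₀ hd0))
    (rescaleQuot_comp_rescaleQuot hk hd hbd hd' hcb (inv_mul_cancel₀ hd0))

lemma rescaleQuotEquiv_pi (hk : 2 ≤ k) (hd : d ^ (5 * k - 6) = 1) (hbd : b * d ^ 2 = c)
    (x : FreeAlgebra K (Fin 5)) :
    rescaleQuotEquiv hk hd hbd (pi K k b x) = pi K k c (rescale d x) :=
  rescaleQuot_pi hk hd hbd x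

end quot

lemma pow_eq_one_of_sq_eq_inv_mul [CharP K 2] {n : ℕ} {b c d : K} (hb : b ≠ 0)
    (hbc : b ^ n = c ^ n) (hd : d ^ 2 = b⁻¹ * c) : d ^ n = 1 := by
  rw [← CharTwo.sq_inj, one_pow, ← pow_mul, mul_comm, pow_mul, hd, mul_pow, ← hbc, inv_pow,
    inv_mul_cancel₀ (pow_ne_zero n hb)]

end SocleWSA6

open SocleWSA6 in
theorem socle_wsa_stmt6_general (K : Type) [Field K] (hchar : CharP K 2)
    (k : ℕ) (hk : 2 ≤ k) (b c : K) (hb : b ≠ 0)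
    (hbc : b ^ (5 * k - 6) = c ^ (5 * k - 6))
    (d : K) (hd : d ^ 2 = b⁻¹ * c) :
    ∃ h : RingQuot (QARel K k b) ≃ₐ[K] RingQuot (QARel K k c),
      h (pi K k b (al K)) = d ^ 2 • pi K k c (al K) ∧
      h (pi K k b (be K)) = pi K k c (be K) ∧
      h (pi K k b (ga K)) = d ^ 3 • pi K k c (ga K) := by
  have hd1 : d ^ (5 * k - 6) = 1 := pow_eq_one_of_sq_eq_inv_mul hb hbc hd
  have hbd : b * d ^ 2 = c := by rw [hd, mul_inv_cancel_left₀ hb]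
  refine ⟨rescaleQuotEquiv hk hd1 hbd, ?_, ?_, ?_⟩ <;>
    simp only [rescaleQuotEquiv_pi, rescale_al, rescale_be, rescale_ga, map_smul]

open SocleWSA6 in
/-- Let `K` be algebraically closed of characteristic 2,
`k ≥ 2`, `b, c ∈ K` nonzero with `b^{5k−6} = c^{5k−6}`.  Then for any
`d ∈ K` with `d² = b⁻¹ c`, the assignment `α ↦ d²α`, `β ↦ β`, `γ ↦ d³γ`
defines a `K`-algebra isomorphism `Q(2A)^k(b) → Q(2A)^k(c)`; in particular
the two algebras are isomorphic. -/
theorem socle_wsa_stmt6 (K : Type) [Field K] [IsAlgClosed K] (hchar : CharP K 2)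
    (k : ℕ) (hk : 2 ≤ k) (b c : K) (hb : b ≠ 0) (hc : c ≠ 0)
    (hbc : b ^ (5 * k - 6) = c ^ (5 * k - 6))
    (d : K) (hd : d ^ 2 = b⁻¹ * c) :
    ∃ h : RingQuot (QARel K k b) ≃ₐ[K] RingQuot (QARel K k c),
      h (pi K k b (al K)) = d ^ 2 • pi K k c (al K) ∧
      h (pi K k b (be K)) = pi K k c (be K) ∧
      h (pi K k b (ga K)) = d ^ 3 • pi K k c (ga K) :=
  socle_wsa_stmt6_general K hchar k hk b c hb hbc d hd
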